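/- arXiv:2605.26866 — 3 statements merged into one kernel-verified Lean document; each statement's English description precedes it below -/
import Mathlib

section
/- The uniform sum of Weyl–Heisenberg displacement operators tensored with their adjoints equals the swap operator: (1/d) · Σ_{a=0}^{d−1} Σ_{b=0}^{d−1} W(a,b) ⊗ W(a,b)ᴴ = S, where ⊗ is the Kronecker product and S is the d²×d² matrix indexed by ZMod d × ZMod d with entries S (i,j) (i',j') = 1 if i = j' and j = i', and 0 otherwise. -/
open Matrix Complex BigOperators
open scoped Kronecker

noncomputable section

/-- `ω = exp(2πi/d)`, the primitive `d`-th root of unity. -/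
def ω (d : ℕ) : ℂ := Complex.exp (2 * Real.pi * Complex.I / d)

/-- `τ = exp(πi(d+1)/d)`, so that `τ² = ω`. -/
def τ (d : ℕ) : ℂ := Complex.exp (Real.pi * Complex.I * (d + 1) / d)

/-- The clock matrix `Z`, diagonal with entries `ω^(j.val)`. -/
def Zmat (d : ℕ) : Matrix (ZMod d) (ZMod d) ℂ :=
  Matrix.diagonal fun j => ω d ^ (j.val)

/-- The shift matrix `X`, with `X j k = 1` iff `j = k + 1` in `ZMod d`. -/
def Xmat (d : ℕ) : Matrix (ZMod d) (ZMod d) ℂ :=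
  Matrix.of fun j k => if j = k + 1 then 1 else 0

lemma omega_ne_zero (d : ℕ) : ω d ≠ 0 := Complex.exp_ne_zero _

/-- The clock matrix as an invertible matrix (a unit of the matrix ring). -/
def Zu (d : ℕ) [NeZero d] : (Matrix (ZMod d) (ZMod d) ℂ)ˣ where
  val := Zmat d
  inv := Matrix.diagonal fun j => (ω d ^ (j.val))⁻¹
  val_inv := by
    rw [Zmat, Matrix.diagonal_mul_diagonal]
    have h : (fun j : ZMod d => ω d ^ j.val * (ω d ^ j.val)⁻¹) = fun _ => 1 := by
      funext j; exact mul_inv_cancel₀ (pow_ne_zero _ (omega_ne_zero d))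
    rw [h, Matrix.diagonal_one]
  inv_val := by
    rw [Zmat, Matrix.diagonal_mul_diagonal]
    have h : (fun j : ZMod d => (ω d ^ j.val)⁻¹ * ω d ^ j.val) = fun _ => 1 := by
      funext j; exact inv_mul_cancel₀ (pow_ne_zero _ (omega_ne_zero d))
    rw [h, Matrix.diagonal_one]

lemma Xmat_mul_transpose (d : ℕ) [NeZero d] : Xmat d * (Xmat d)ᵀ = 1 := by
  ext i j
  simp only [Matrix.mul_apply, Matrix.transpose_apply, Xmat, Matrix.of_apply,
    Matrix.one_apply, ite_mul, one_mul, zero_mul]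
  have h : ∀ m : ZMod d,
      (if i = m + 1 then (if j = m + 1 then (1:ℂ) else 0) else 0)
        = (if m = i - 1 then (if j = m + 1 then (1:ℂ) else 0) else 0) := by
    intro m
    by_cases hm : i = m + 1
    · have hm' : m = i - 1 := by rw [hm]; ring
      rw [if_pos hm, if_pos hm']
    · have hm' : ¬ m = i - 1 := fun h' => hm (by rw [h']; ring)
      rw [if_neg hm, if_neg hm']
  rw [Finset.sum_congr rfl fun m _ => h m, Finset.sum_ite_eq' Finset.univ (i - 1)]
  simp only [Finset.mem_univ, if_true, sub_add_cancel]
  by_cases hij : i = j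
  · subst hij; simp
  · rw [if_neg (fun h' => hij h'.symm), if_neg hij]

/-- The shift matrix as an invertible matrix (a unit of the matrix ring). -/
def Xu (d : ℕ) [NeZero d] : (Matrix (ZMod d) (ZMod d) ℂ)ˣ :=
  ⟨Xmat d, (Xmat d)ᵀ, Xmat_mul_transpose d,
    mul_eq_one_comm.mp (Xmat_mul_transpose d)⟩

/-- The Weyl–Heisenberg displacement operator `W(a,b) = τ^(ab) • X^a * Z^b`,
where `X^a`, `Z^b` are integer (`zpow`) powers of the invertible matrices `X`, `Z`. -/
def Wop (d : ℕ) [NeZero d] (a b : ℤ) : Matrix (ZMod d) (ZMod d) ℂ :=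
  τ d ^ (a * b) •
    (((Xu d ^ a : (Matrix (ZMod d) (ZMod d) ℂ)ˣ) : Matrix (ZMod d) (ZMod d) ℂ) *
      ((Zu d ^ b : (Matrix (ZMod d) (ZMod d) ℂ)ˣ) : Matrix (ZMod d) (ZMod d) ℂ))

/-- The maximally entangled vector `Φ(j,k) = 1/√d` if `j = k`, else `0`. -/
def MES (d : ℕ) : ZMod d × ZMod d → ℂ :=
  fun p => if p.1 = p.2 then ((1 / Real.sqrt d : ℝ) : ℂ) else 0

/-- The generalized Bell vector `B(a,b)(s,t) = ω^(−b·t.val)/√d` if `s = t − a`, else `0`. -/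
def Bell (d : ℕ) (a b : ℤ) : ZMod d × ZMod d → ℂ :=
  fun p => if p.1 = p.2 - (a : ZMod d)
    then ω d ^ (-(b * (p.2.val : ℤ))) / ((Real.sqrt d : ℝ) : ℂ) else 0

/-- The phase `φ(a,b) = τ^(−(a² + b² − (n+1)·a·b))`. -/
def φcoef (d n : ℕ) (a b : ℤ) : ℂ :=
  τ d ^ (-(a ^ 2 + b ^ 2 - ((n : ℤ) + 1) * a * b))

/-- The encryption operator `U_enc`. -/
def Uenc (d n : ℕ) [NeZero d] :
    Matrix (ZMod d × (Fin n → ZMod d)) (ZMod d × (Fin n → ZMod d)) ℂ :=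
  Matrix.of fun p q => (1 / (d : ℂ)) *
    ∑ a ∈ Finset.range d, ∑ b ∈ Finset.range d,
      (φcoef d n a b)⁻¹ * Wop d a b p.1 q.1 *
        ∏ i, (Wop d a b)ᴴ (p.2 i) (q.2 i)

/-- The decryption operator `U_dec` for decrypting the `l`-th signal qudit. -/
def Udec (d n : ℕ) [NeZero d] (l : Fin n) :
    Matrix (ZMod d × (Fin n → ZMod d)) (ZMod d × (Fin n → ZMod d)) ℂ :=
  Matrix.of fun p q =>
    ∑ a ∈ Finset.range d, ∑ b ∈ Finset.range d,
      φcoef d n a b * Bell d a b (p.1, p.2 l) *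
        (starRingEnd ℂ) (Bell d a b (q.1, q.2 l)) *
        ∏ i ∈ Finset.univ.erase l, (Wop d a b)ᵀ (p.2 i) (q.2 i)

/-- The initial global state `Ψ₀(k,s,t) = ψ(k)·d^(−n/2)` if `s = t`, else `0`. -/
def Ψinit (d n : ℕ) (ψ : ZMod d → ℂ) :
    ZMod d × (Fin n → ZMod d) × (Fin n → ZMod d) → ℂ :=
  fun p => if p.2.1 = p.2.2 then ψ p.1 * (((d : ℝ) ^ (-(n : ℝ) / 2) : ℝ) : ℂ) else 0

/-- The encrypted global state `Ψ_enc = U_enc Ψ₀` (U_enc acting on A and the signals). -/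
def Ψenc (d n : ℕ) [NeZero d] (ψ : ZMod d → ℂ) :
    ZMod d × (Fin n → ZMod d) × (Fin n → ZMod d) → ℂ :=
  fun p => ∑ k' : ZMod d, ∑ s' : Fin n → ZMod d,
    Uenc d n (p.1, p.2.1) (k', s') * Ψinit d n ψ (k', s', p.2.2)

/-- Assemble a function `Fin n → α` from a value `u` at index `i₀` and values `g`
on the remaining indices. -/
def insVal {α : Type*} {n : ℕ} (i₀ : Fin n) (u : α) (g : {i : Fin n // i ≠ i₀} → α) :
    Fin n → α :=
  fun i => if h : i = i₀ then u else g ⟨i, h⟩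


lemma tau_ne_zero (d : ℕ) : τ d ≠ 0 := Complex.exp_ne_zero _

lemma conj_tau (d : ℕ) : (starRingEnd ℂ) (τ d) = (τ d)⁻¹ := by
  rw [τ, ← Complex.exp_conj, ← Complex.exp_neg]
  congr 1
  simp only [map_div₀, _root_.map_mul, _root_.map_add, Complex.conj_I,
    Complex.conj_ofReal, Complex.conj_natCast, _root_.map_one]
  ring

lemma conj_omega (d : ℕ) : (starRingEnd ℂ) (ω d) = (ω d)⁻¹ := by
  rw [ω, ← Complex.exp_conj, ← Complex.exp_neg]
  congr 1
  simp only [map_div₀, _root_.map_mul, Complex.conj_I, Complex.conj_ofReal,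
    Complex.conj_natCast, map_ofNat]
  ring

lemma Xu_pow_apply (d : ℕ) [NeZero d] (a : ℕ) (j k : ZMod d) :
    ((Xu d ^ a : (Matrix (ZMod d) (ZMod d) ℂ)ˣ) : Matrix (ZMod d) (ZMod d) ℂ) j k
      = if j = k + (a : ZMod d) then 1 else 0 := by
  induction a generalizing j k with
  | zero => simp [Matrix.one_apply]
  | succ n ih =>
    have hval : ((Xu d ^ (n + 1) : (Matrix (ZMod d) (ZMod d) ℂ)ˣ)
          : Matrix (ZMod d) (ZMod d) ℂ)
        = Xmat d * ((Xu d ^ n : (Matrix (ZMod d) (ZMod d) ℂ)ˣ)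
          : Matrix (ZMod d) (ZMod d) ℂ) := by
      rw [pow_succ']; rfl
    rw [hval, Matrix.mul_apply]
    have h : ∀ m : ZMod d,
        Xmat d j m * ((Xu d ^ n : (Matrix (ZMod d) (ZMod d) ℂ)ˣ)
            : Matrix (ZMod d) (ZMod d) ℂ) m k
          = if m = j - 1 then (if j - 1 = k + (n : ZMod d) then 1 else 0) else 0 := by
      intro m
      rw [ih, Xmat]
      by_cases hm : m = j - 1
      · subst hm; simp
      · have : ¬ j = m + 1 := fun h' => hm (by rw [h']; ring)
        simp [this, hm]
    rw [Finset.sum_congr rfl fun m _ => h m,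
      Finset.sum_ite_eq' Finset.univ (j - 1)]
    simp only [Finset.mem_univ, if_true]
    have hiff : (j - 1 = k + (n : ZMod d)) ↔ (j = k + ((n + 1 : ℕ) : ZMod d)) := by
      rw [sub_eq_iff_eq_add]
      push_cast
      rw [add_assoc]
    rw [if_congr hiff rfl rfl]

lemma Zu_pow_val (d : ℕ) [NeZero d] (b : ℕ) :
    ((Zu d ^ b : (Matrix (ZMod d) (ZMod d) ℂ)ˣ) : Matrix (ZMod d) (ZMod d) ℂ)
      = Matrix.diagonal fun j => ω d ^ (b * j.val) := by
  induction b with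
  | zero => simp
  | succ n ih =>
    have hval : ((Zu d ^ (n + 1) : (Matrix (ZMod d) (ZMod d) ℂ)ˣ)
          : Matrix (ZMod d) (ZMod d) ℂ)
        = Zmat d * ((Zu d ^ n : (Matrix (ZMod d) (ZMod d) ℂ)ˣ)
          : Matrix (ZMod d) (ZMod d) ℂ) := by
      rw [pow_succ']; rfl
    rw [hval, ih, Zmat, Matrix.diagonal_mul_diagonal]
    have : (fun i : ZMod d => ω d ^ i.val * ω d ^ (n * i.val))
        = fun i : ZMod d => ω d ^ ((n + 1) * i.val) := by
      funext i; rw [← pow_add]; congr 1; ring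
    rw [this]

lemma Wop_apply (d : ℕ) [NeZero d] (a b : ℕ) (j k : ZMod d) :
    Wop d (a : ℤ) (b : ℤ) j k
      = if j = k + (a : ZMod d) then τ d ^ (a * b) * ω d ^ (b * k.val) else 0 := by
  rw [Wop, zpow_natCast, zpow_natCast]
  have he : τ d ^ ((a : ℤ) * (b : ℤ)) = τ d ^ (a * b) := by
    rw [show ((a : ℤ) * (b : ℤ)) = ((a * b : ℕ) : ℤ) by push_cast; ring, zpow_natCast]
  rw [Matrix.smul_apply, Zu_pow_val, Matrix.mul_diagonal, Xu_pow_apply, he,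
    smul_eq_mul]
  by_cases hj : j = k + (a : ZMod d) <;> simp [hj]

lemma term_eq (d : ℕ) [NeZero d] (a b : ℕ) (i j i' j' : ZMod d) :
    Wop d (a : ℤ) (b : ℤ) i i' * (starRingEnd ℂ) (Wop d (a : ℤ) (b : ℤ) j' j)
      = if i = i' + (a : ZMod d) ∧ j' = j + (a : ZMod d)
          then (ω d ^ ((i'.val : ℤ) - (j.val : ℤ))) ^ b else 0 := by
  rw [Wop_apply, Wop_apply]
  by_cases h1 : i = i' + (a : ZMod d)
  · by_cases h2 : j' = j + (a : ZMod d)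
    · rw [if_pos h1, if_pos h2, if_pos ⟨h1, h2⟩]
      rw [_root_.map_mul, map_pow, map_pow, conj_tau, conj_omega]
      have htau : τ d ^ (a * b) * ((τ d)⁻¹) ^ (a * b) = 1 := by
        rw [inv_pow, mul_inv_cancel₀ (pow_ne_zero _ (tau_ne_zero d))]
      calc τ d ^ (a * b) * ω d ^ (b * i'.val) *
            ((τ d)⁻¹ ^ (a * b) * (ω d)⁻¹ ^ (b * j.val))
          = (τ d ^ (a * b) * ((τ d)⁻¹) ^ (a * b)) *
            (ω d ^ (b * i'.val) * ((ω d)⁻¹) ^ (b * j.val)) := by ring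
        _ = ω d ^ (b * i'.val) * ((ω d)⁻¹) ^ (b * j.val) := by rw [htau, one_mul]
        _ = ω d ^ ((b * i'.val : ℕ) : ℤ) * ω d ^ (-((b * j.val : ℕ) : ℤ)) := by
            rw [zpow_natCast, _root_.zpow_neg, zpow_natCast, inv_pow]
        _ = ω d ^ (((i'.val : ℤ) - (j.val : ℤ)) * b) := by
            rw [← zpow_add₀ (omega_ne_zero d)]; congr 1; push_cast; ring
        _ = (ω d ^ ((i'.val : ℤ) - (j.val : ℤ))) ^ b := by
            rw [_root_.zpow_mul, zpow_natCast]
    · simp [h1, h2]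
  · simp [h1]

lemma geom_sum_omega (d : ℕ) [NeZero d] (m : ℤ) :
    ∑ b ∈ Finset.range d, (ω d ^ m) ^ b = if (d : ℤ) ∣ m then (d : ℂ) else 0 := by
  have hprim : IsPrimitiveRoot (ω d) d := Complex.isPrimitiveRoot_exp d (NeZero.ne d)
  by_cases h : (d : ℤ) ∣ m
  · rw [if_pos h, (hprim.zpow_eq_one_iff_dvd m).mpr h]
    simp
  · rw [if_neg h]
    have hx : ω d ^ m ≠ 1 := fun h' => h ((hprim.zpow_eq_one_iff_dvd m).mp h')
    rw [geom_sum_eq hx]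
    have : (ω d ^ m) ^ d = 1 := by
      rw [← zpow_natCast, ← _root_.zpow_mul, mul_comm, _root_.zpow_mul,
        zpow_natCast, hprim.pow_eq_one, _root_.one_zpow]
    rw [this, sub_self, zero_div]

lemma dvd_iff_eq (d : ℕ) [NeZero d] (i' j : ZMod d) :
    (d : ℤ) ∣ ((i'.val : ℤ) - (j.val : ℤ)) ↔ i' = j := by
  rw [← ZMod.intCast_zmod_eq_zero_iff_dvd]
  push_cast
  rw [ZMod.natCast_rightInverse i', ZMod.natCast_rightInverse j, sub_eq_zero]

lemma sum_ite_const {α : Type*} [AddCommMonoid α] (s : Finset ℕ) (c : Prop)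
    [Decidable c] (f : ℕ → α) :
    ∑ x ∈ s, (if c then f x else 0) = if c then ∑ x ∈ s, f x else 0 := by
  split_ifs <;> simp

/-- `(1/d)·Σ_{a,b} W(a,b) ⊗ W(a,b)ᴴ` equals the swap operator. -/
theorem weyl_sum_eq_swap (d : ℕ) [NeZero d] (hd : 2 ≤ d) :
    (1 / (d : ℂ)) • (∑ a ∈ Finset.range d, ∑ b ∈ Finset.range d,
        Wop d (a : ℤ) (b : ℤ) ⊗ₖ (Wop d (a : ℤ) (b : ℤ))ᴴ)
      = Matrix.of fun p q : ZMod d × ZMod d =>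
          if p.1 = q.2 ∧ p.2 = q.1 then (1 : ℂ) else 0 := by
  have hd0 : (d : ℂ) ≠ 0 := Nat.cast_ne_zero.mpr (NeZero.ne d)
  ext ⟨i, j⟩ ⟨i', j'⟩
  rw [Matrix.smul_apply, Matrix.of_apply, smul_eq_mul, Matrix.sum_apply]
  have hterm : ∀ a ∈ Finset.range d,
      (∑ b ∈ Finset.range d, Wop d (a : ℤ) (b : ℤ) ⊗ₖ (Wop d (a : ℤ) (b : ℤ))ᴴ)
          (i, j) (i', j')
        = if i = i' + (a : ZMod d) ∧ j' = j + (a : ZMod d)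
            then (if i' = j then (d : ℂ) else 0) else 0 := by
    intro a _
    rw [Matrix.sum_apply]
    have : ∀ b ∈ Finset.range d,
        (Wop d (a : ℤ) (b : ℤ) ⊗ₖ (Wop d (a : ℤ) (b : ℤ))ᴴ) (i, j) (i', j')
          = if i = i' + (a : ZMod d) ∧ j' = j + (a : ZMod d)
              then (ω d ^ ((i'.val : ℤ) - (j.val : ℤ))) ^ b else 0 := by
      intro b _
      rw [Matrix.kroneckerMap_apply, Matrix.conjTranspose_apply]
      exact term_eq d a b i j i' j'
    rw [Finset.sum_congr rfl this, sum_ite_const, geom_sum_omega]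
    simp only [dvd_iff_eq]
  rw [Finset.sum_congr rfl hterm]
  set a₀ : ℕ := (i - i').val with ha₀
  have ha₀mem : a₀ ∈ Finset.range d := Finset.mem_range.mpr (ZMod.val_lt _)
  have ha₀cast : ((a₀ : ℕ) : ZMod d) = i - i' := ZMod.natCast_rightInverse _
  rw [Finset.sum_eq_single_of_mem a₀ ha₀mem ?side]
  case side =>
    intro a hamem hane
    rw [if_neg]
    rintro ⟨h1, -⟩
    apply hane
    have : ((a : ℕ) : ZMod d) = i - i' := by rw [h1]; ring
    rw [ha₀, ← this, ZMod.val_cast_of_lt (Finset.mem_range.mp hamem)]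
  rw [ha₀cast]
  have h1 : i = i' + (i - i') := by ring
  by_cases h2 : j' = j + (i - i')
  · by_cases h3 : i' = j
    · have h4 : i = j' ∧ j = i' := by
        constructor
        · rw [h2, ← h3, ← h1]
        · rw [h3]
      rw [if_pos ⟨h1, h2⟩, if_pos h3, if_pos h4]
      field_simp
    · have h4 : ¬(i = j' ∧ j = i') := fun h => h3 h.2.symm
      rw [if_pos ⟨h1, h2⟩, if_neg h3, if_neg h4, mul_zero]
  · have h4 : ¬(i = j' ∧ j = i') := by
      rintro ⟨ha, hb⟩
      apply h2
      rw [← ha, hb]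
      exact h1
    rw [if_neg (fun h => h2 h.2), if_neg h4, mul_zero]

end
end

section
/- For d = 2 and n = 3 with uniform input ψ(k) = 1/√2, the reduced density matrix of the encrypted state on registers (A, S₁, N₁) equals (1/8)·(I₈ + X ⊗ X ⊗ X), where X is the 2×2 shift (Pauli-X) matrix, ⊗ denotes the Kronecker product, and I₈ is the 8×8 identity matrix. -/
open Matrix Complex BigOperators
open scoped Kronecker

noncomputable section

/-- The uniform input state `ψ(k) = 1/√d`. -/
def ψunif (d : ℕ) : ZMod d → ℂ := fun _ => ((1 / Real.sqrt d : ℝ) : ℂ)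


/- ===== auxiliary lemmas ===== -/

lemma tau2 : τ 2 = -I := by
  have h : (Real.pi * Complex.I * (2 + 1) / 2 : ℂ)
      = Real.pi * I + ((Real.pi / 2 : ℝ) : ℂ) * I := by push_cast; ring
  rw [τ]
  rw [show ((2:ℕ):ℂ) = (2:ℂ) by norm_num] at *
  rw [h, Complex.exp_add, Complex.exp_pi_mul_I, Complex.exp_mul_I,
    ← Complex.ofReal_cos, ← Complex.ofReal_sin]
  simp [Real.cos_pi_div_two, Real.sin_pi_div_two]

lemma omega2 : ω 2 = -1 := by
  have h : (2 * Real.pi * Complex.I / 2 : ℂ) = Real.pi * I := by push_cast; ring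
  rw [ω]
  rw [show ((2:ℕ):ℂ) = (2:ℂ) by norm_num]
  rw [h, Complex.exp_pi_mul_I]

lemma W00_apply (j k : ZMod 2) : Wop 2 0 0 j k = if j = k then 1 else 0 := by
  simp [Wop, Matrix.one_apply]

lemma W10_apply (j k : ZMod 2) : Wop 2 1 0 j k = if j = k + 1 then 1 else 0 := by
  simp [Wop, Xu, Xmat]

lemma W01_apply (j k : ZMod 2) :
    Wop 2 0 1 j k = if j = k then (-1 : ℂ) ^ (k.val) else 0 := by
  by_cases h : j = k <;> simp [Wop, Zu, Zmat, Matrix.diagonal_apply, omega2, h]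

lemma W11_apply (j k : ZMod 2) :
    Wop 2 1 1 j k = -I * (if j = k + 1 then (-1 : ℂ) ^ (k.val) else 0) := by
  have : ∀ m : ZMod 2, (if j = m + 1 then (1:ℂ) else 0) * (if m = k then (-1:ℂ) ^ m.val else 0)
      = if m = k then (if j = k + 1 then (-1:ℂ) ^ k.val else 0) else 0 := by
    intro m; by_cases hm : m = k <;> simp [hm]
  simp only [Wop, zpow_one, Xu, Zu, tau2, Matrix.smul_apply, Matrix.mul_apply, Xmat, Zmat,
    Matrix.diagonal_apply, omega2, Matrix.of_apply, smul_eq_mul]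
  rw [Finset.sum_congr rfl fun m _ => this m, Finset.sum_ite_eq' Finset.univ k]
  simp

lemma phi00 : (φcoef 2 3 0 0)⁻¹ = 1 := by norm_num [φcoef]

lemma phi10 : (φcoef 2 3 1 0)⁻¹ = -I := by
  norm_num [φcoef, tau2]

lemma phi01 : (φcoef 2 3 0 1)⁻¹ = -I := by
  norm_num [φcoef, tau2]

lemma phi11 : (φcoef 2 3 1 1)⁻¹ = -1 := by
  norm_num [φcoef, tau2]

lemma zmod2_sum (f : ZMod 2 → ℂ) : ∑ x : ZMod 2, f x = f 0 + f 1 := by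
  have h : (Finset.univ : Finset (ZMod 2)) = {0, 1} := by decide
  rw [h, Finset.sum_insert (by decide), Finset.sum_singleton]

lemma sum_pi2 (F : ({i : Fin 3 // i ≠ 0} → ZMod 2) → ℂ) :
    ∑ g : ({i : Fin 3 // i ≠ 0} → ZMod 2), F g
      = ∑ x : ZMod 2, ∑ y : ZMod 2, F (fun i => if i.1 = 1 then x else y) := by
  refine Eq.trans (Fintype.sum_bijective (fun p : ZMod 2 × ZMod 2 => fun i : {i : Fin 3 // i ≠ 0} =>
    if i.1 = 1 then p.1 else p.2) ?_
    (fun p => F (fun i => if i.1 = 1 then p.1 else p.2)) F (fun p => rfl)).symm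
    (by rw [Fintype.sum_prod_type])
  have hcases : ∀ i : {i : Fin 3 // i ≠ 0}, i.1 = 1 ∨ i.1 = 2 := by decide
  constructor
  · intro p q hpq
    have h1 := congrFun hpq ⟨1, by decide⟩
    have h2 := congrFun hpq ⟨2, by decide⟩
    simp at h1 h2
    exact Prod.ext h1 h2
  · intro g
    refine ⟨(g ⟨1, by decide⟩, g ⟨2, by decide⟩), funext fun i => ?_⟩
    show (if i.1 = 1 then g ⟨1, by decide⟩ else g ⟨2, by decide⟩) = g i
    rcases hcases i with h | h
    · rw [if_pos h]
      congr 1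
      exact Subtype.ext h.symm
    · rw [if_neg (by rw [h]; decide)]
      congr 1
      exact Subtype.ext h.symm

lemma const_eq : ((1 / Real.sqrt 2 : ℝ) : ℂ) * (((2:ℝ) ^ (-(3:ℝ)/2) : ℝ) : ℂ) = 1/4 := by
  have h2 : (2:ℝ) ^ ((3:ℝ)/2) = 2 * Real.sqrt 2 := by
    rw [show (3:ℝ)/2 = 1 + 1/2 by ring, Real.rpow_add (by norm_num), Real.rpow_one,
      ← Real.sqrt_eq_rpow]
  have h1 : (2:ℝ) ^ (-(3:ℝ)/2) = (2 * Real.sqrt 2)⁻¹ := by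
    rw [show (-(3:ℝ)/2) = -((3:ℝ)/2) by ring, Real.rpow_neg (by norm_num), h2]
  have hs : Real.sqrt 2 * Real.sqrt 2 = 2 := Real.mul_self_sqrt (by norm_num)
  have : (1 / Real.sqrt 2) * (2:ℝ) ^ (-(3:ℝ)/2) = 1/4 := by
    rw [h1]
    field_simp
    nlinarith [hs]
  rw [← Complex.ofReal_mul, this]
  norm_num

lemma psi_enc_eq (k : ZMod 2) (s t : Fin 3 → ZMod 2) :
    Ψenc 2 3 (ψunif 2) (k, s, t) = (1/8 : ℂ) *
      ((∏ i, (if t i = s i then (1:ℂ) else 0))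
       + (-I) * (∏ i, (if t i = s i + 1 then (1:ℂ) else 0))
       + (-I) * (-1:ℂ)^(k.val) * (∏ i, (if t i = s i then (-1:ℂ)^((s i).val) else 0))
       + (-1:ℂ)^(((k+1) : ZMod 2).val)
          * (∏ i, (if t i = s i + 1 then (-1:ℂ)^((s i).val) else 0))) := by
  simp only [Ψenc, Ψinit, ψunif, mul_ite, mul_zero, Finset.sum_ite_eq', Finset.mem_univ,
    if_true]
  simp only [Uenc, Matrix.of_apply, Finset.sum_range_succ, Finset.sum_range_zero, zero_add,
    Nat.cast_zero, Nat.cast_one, phi00, phi10, phi01, phi11,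
    Matrix.conjTranspose_apply, W00_apply, W10_apply, W01_apply, W11_apply, Nat.cast_ofNat]
  simp only [Complex.star_def, _root_.map_mul, _root_.map_neg, Complex.conj_I,
    apply_ite (starRingEnd ℂ), _root_.map_one, _root_.map_zero, _root_.map_pow,
    Finset.prod_mul_distrib, Finset.prod_const, Finset.card_univ, Fintype.card_fin]
  rw [const_eq, zmod2_sum]
  have hI3 : (I:ℂ)^3 = -I := by rw [pow_succ, Complex.I_sq]; ring
  have hk : ∀ z : ZMod 2, z = 0 ∨ z = 1 := by decide
  have hite : ∀ (p : Prop) [Decidable p] (a : ℂ), (if p then I * a else 0) = I * (if p then a else 0) := by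
    intros p _ a; split <;> simp
  rcases hk k with rfl | rfl <;>
    [skip; skip] <;>
    simp only [apply_ite (starRingEnd ℂ), _root_.map_neg, _root_.map_mul, _root_.map_pow,
      _root_.map_one, _root_.map_zero, Complex.conj_I, neg_neg, neg_mul, hite,
      Finset.prod_mul_distrib, Finset.prod_const, Finset.card_univ, Fintype.card_fin, hI3] <;>
    simp only [if_true, ZMod.val_zero, ZMod.val_one,
      show ((0:ZMod 2) = 0 + 1) ↔ False from by decide,
      show ((0:ZMod 2) = 1) ↔ False from by decide,
      show ((0:ZMod 2) = 1 + 1) ↔ True from by decide,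
      show ((1:ZMod 2) = 0) ↔ False from by decide,
      show ((1:ZMod 2) = 0 + 1) ↔ True from by decide,
      show ((1:ZMod 2) = 1 + 1) ↔ False from by decide,
      show (((0:ZMod 2) + 1)).val = 1 from rfl,
      show (((1:ZMod 2) + 1)).val = 0 from rfl,
      if_false, pow_zero, pow_one, mul_one, one_mul, mul_zero, zero_mul, neg_zero,
      add_zero, zero_add, neg_neg]
  · linear_combination (∏ x : Fin 3, if t x = s x + 1 then (-1:ℂ) ^ (s x).val else 0) / 8
      * Complex.I_sq
  · linear_combination -(∏ x : Fin 3, if t x = s x + 1 then (-1:ℂ) ^ (s x).val else 0) / 8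
      * Complex.I_sq

lemma insVal_zero (u : ZMod 2) (g : {i : Fin 3 // i ≠ 0} → ZMod 2) :
    insVal 0 u g 0 = u := rfl

lemma insVal_one (u : ZMod 2) (g : {i : Fin 3 // i ≠ 0} → ZMod 2) :
    insVal 0 u g 1 = g ⟨1, by decide⟩ := rfl

lemma insVal_two (u : ZMod 2) (g : {i : Fin 3 // i ≠ 0} → ZMod 2) :
    insVal 0 u g 2 = g ⟨2, by decide⟩ := rfl

set_option maxHeartbeats 4000000 in
/-- for `d = 2`, `n = 3` with uniform input, the reduced density
matrix of the encrypted state on `(A, S₁, N₁)` equals `(1/8)(I₈ + X ⊗ X ⊗ X)`. -/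
theorem reduced_AS1N1_d2_n3 :
    (Matrix.of fun x y : ZMod 2 × ZMod 2 × ZMod 2 =>
        ∑ g : {i : Fin 3 // i ≠ 0} → ZMod 2,
        ∑ h : {i : Fin 3 // i ≠ 0} → ZMod 2,
          Ψenc 2 3 (ψunif 2) (x.1, insVal 0 x.2.1 g, insVal 0 x.2.2 h) *
            (starRingEnd ℂ) (Ψenc 2 3 (ψunif 2)
              (y.1, insVal 0 y.2.1 g, insVal 0 y.2.2 h)))
      = (1 / 8 : ℂ) •
          ((1 : Matrix (ZMod 2 × ZMod 2 × ZMod 2) (ZMod 2 × ZMod 2 × ZMod 2) ℂ)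
            + Xmat 2 ⊗ₖ (Xmat 2 ⊗ₖ Xmat 2)) := by
  have hz : ∀ z : ZMod 2, z = 0 ∨ z = 1 := by decide
  ext ⟨u, v, w⟩ ⟨u', v', w'⟩
  simp only [Matrix.of_apply]
  rcases hz u with rfl|rfl <;> rcases hz v with rfl|rfl <;> rcases hz w with rfl|rfl <;>
    rcases hz u' with rfl|rfl <;> rcases hz v' with rfl|rfl <;> rcases hz w' with rfl|rfl <;>
    simp only [psi_enc_eq, Fin.prod_univ_three, insVal_zero, insVal_one, insVal_two,
      sum_pi2] <;>
    simp only [zmod2_sum] <;>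
    simp (config := { decide := true }) [Matrix.smul_apply, Matrix.add_apply, Matrix.one_apply,
      Matrix.kroneckerMap_apply, Xmat, Matrix.of_apply, _root_.map_mul, _root_.map_add,
      _root_.map_pow, _root_.map_neg, _root_.map_one, _root_.map_zero, _root_.map_ofNat,
      Complex.conj_I, apply_ite (starRingEnd ℂ), Complex.I_sq, smul_eq_mul] <;>
    try ring_nf <;>
    try simp [Complex.I_sq] <;>
    try norm_num

end
end

section
/- The Weyl–Heisenberg displacement operators are all symmetric or antisymmetric only in dimension two: for d ≥ 2, one has (for all integers a, b with 0 ≤ a, b < d, W(a,b)ᵀ = W(a,b) or W(a,b)ᵀ = −W(a,b)) if and only if d = 2. -/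
open Matrix Complex BigOperators
open scoped Kronecker

noncomputable section

/-- all displacement operators `W(a,b)` with `0 ≤ a, b < d` are
symmetric or antisymmetric if and only if `d = 2`. -/
theorem weyl_all_symmetric_or_antisymmetric_iff (d : ℕ) [NeZero d] (hd : 2 ≤ d) :
    (∀ a b : ℤ, 0 ≤ a → a < d → 0 ≤ b → b < d →
        (Wop d a b)ᵀ = Wop d a b ∨ (Wop d a b)ᵀ = -Wop d a b)
      ↔ d = 2 := by
  have hW10 : ∀ (d : ℕ) [NeZero d], Wop d 1 0 = Xmat d := by
    intro d _
    simp [Wop, Xu]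
  constructor
  · intro h
    by_contra hne
    have hd3 : 3 ≤ d := by omega
    have h2 : ((1 : ZMod d) + 1) ≠ 0 := by
      intro hc
      have : ((2 : ℕ) : ZMod d) = 0 := by push_cast; linear_combination hc
      rw [ZMod.natCast_eq_zero_iff] at this
      have := Nat.le_of_dvd (by norm_num) this
      omega
    have hb := h 1 0 (by norm_num) (by exact_mod_cast Nat.one_lt_cast.mpr (by omega))
      (by norm_num) (by exact_mod_cast Nat.cast_pos.mpr (by omega))
    rw [hW10] at hb
    rcases hb with hb | hb
    · have := congrFun (congrFun hb 1) 0
      simp [Xmat, Matrix.transpose_apply] at this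
      exact h2 this.symm
    · have := congrFun (congrFun hb 1) 0
      simp [Xmat, Matrix.transpose_apply] at this
      rw [if_neg (fun hc => h2 hc.symm)] at this
      norm_num at this
  · rintro rfl
    intro a b ha ha2 hb hb2
    have homega : ω 2 = -1 := by
      rw [ω]
      rw [show (2 * (Real.pi : ℂ) * Complex.I / (2:ℕ)) = Real.pi * Complex.I by
        push_cast; ring]
      exact Complex.exp_pi_mul_I
    have ha2' : a < 2 := by exact_mod_cast ha2
    have hb2' : b < 2 := by exact_mod_cast hb2
    interval_cases a <;> interval_cases b
    · -- a = 0, b = 0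
      left
      simp [Wop]
    · -- a = 0, b = 1
      left
      simp [Wop, Zu, Zmat, Matrix.diagonal_transpose]
    · -- a = 1, b = 0
      left
      rw [hW10]
      ext i j
      have key : ∀ i j : ZMod 2, (i = j + 1) = (j = i + 1) := by decide
      simp only [Matrix.transpose_apply, Xmat, Matrix.of_apply]
      simp only [key i j]
    · -- a = 1, b = 1
      right
      have hW11 : Wop 2 1 1 = τ 2 • (Xmat 2 * Zmat 2) := by
        simp [Wop, Xu, Zu]
      rw [hW11, Matrix.transpose_smul, ← smul_neg]
      congr 1
      ext i j
      simp only [Matrix.transpose_apply, Matrix.neg_apply, Zmat, Matrix.mul_diagonal,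
        Xmat, Matrix.of_apply]
      have e01 : (0 : ZMod 2) = 1 + 1 := by decide
      have e10 : (1 : ZMod 2) = 0 + 1 := by decide
      have e00 : ¬ ((0 : ZMod 2) = 0 + 1) := by decide
      have e11 : ¬ ((1 : ZMod 2) = 1 + 1) := by decide
      have v0 : (0 : ZMod 2).val = 0 := rfl
      have v1 : (1 : ZMod 2).val = 1 := rfl
      have hc : ∀ m : ZMod 2, m = 0 ∨ m = 1 := by decide
      rcases hc i with rfl | rfl <;> rcases hc j with rfl | rfl <;>
        first
        | (rw [if_neg e00]; ring)
        | (rw [if_neg e11]; ring)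
        | (rw [if_pos e10, if_pos e01, v0, v1, homega]; ring)

end
end
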